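/- Let H be a real Hilbert space, U ⊆ H a set containing at least two points, R an operator defined on U mapping into H, Y ⊆ H a set containing at least two points with R(U) ⊆ Y, and T an operator defined on Y mapping into H. Then SRG_U(T ∘ R) ⊆ (SRG_Y(T)⁺ · SRG_U(R)) ∩ (SRG_Y(T) · SRG_U(R)⁺) ∩ (SRG_Y(T)⁻ · SRG_U(R)) ∩ (SRG_Y(T) · SRG_U(R)⁻), where C^± := ∪_{z∈C} Arc^±(z,z̄) denote the right- and left-arc completions and the products are Minkowski products in ℂ. -/

import Mathlib

open ComplexConjugate
open scoped RealInnerProductSpace Pointwise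

/-- The point `(‖Δy‖/‖Δu‖)·e^{iθ}` with `θ = arccos(⟨Δu,Δy⟩/(‖Δu‖‖Δy‖)) ∈ [0,π]`
contributed to the SRG by a pair of increments `Δu`, `Δy` (equal to `0` when `Δy = 0`). -/
noncomputable def srgPoint {H : Type*} [NormedAddCommGroup H] [InnerProductSpace ℝ H]
    (du dy : H) : ℂ :=
  ((‖dy‖ / ‖du‖ : ℝ) : ℂ) *
    Complex.exp (Complex.I * ((Real.arccos (⟪du, dy⟫ / (‖du‖ * ‖dy‖)) : ℝ) : ℂ))

/-- The Scaled Relative Graph of an operator `R` on a real Hilbert space over a set `U` of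
inputs; both signs of the angle are included (via complex conjugation). -/
noncomputable def SRG {H : Type*} [NormedAddCommGroup H] [InnerProductSpace ℝ H]
    (R : H → H) (U : Set H) : Set ℂ :=
  { z | ∃ u₁ ∈ U, ∃ u₂ ∈ U, u₁ ≠ u₂ ∧
      (z = srgPoint (u₁ - u₂) (R u₁ - R u₂) ∨
        z = conj (srgPoint (u₁ - u₂) (R u₁ - R u₂))) }

/-- The Scaled Graph of an operator `R` at the particular input `us`, over a set `U` of inputs. -/
noncomputable def SG {H : Type*} [NormedAddCommGroup H] [InnerProductSpace ℝ H]
    (R : H → H) (U : Set H) (us : H) : Set ℂ :=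
  { z | ∃ u ∈ U, u ≠ us ∧
      (z = srgPoint (u - us) (R u - R us) ∨
        z = conj (srgPoint (u - us) (R u - R us))) }

/-- A set `C ⊆ ℂ` satisfies the chord property if for every `z ∈ C` the segment `[z, z̄]`
is contained in `C`. -/
def ChordProperty (C : Set ℂ) : Prop :=
  ∀ z ∈ C, ∀ α ∈ Set.Icc (0 : ℝ) 1, (α : ℂ) * z + ((1 - α : ℝ) : ℂ) * conj z ∈ C

/-- The right-hand arc `Arc⁺(z, z̄) = { r e^{i(1−2α)φ} : α ∈ [0,1] }`, where `z = r e^{iφ}`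
with `φ = arg z ∈ (−π, π]`. -/
noncomputable def arcPlus (z : ℂ) : Set ℂ :=
  { w | ∃ α ∈ Set.Icc (0 : ℝ) 1,
      w = ((‖z‖ : ℝ) : ℂ) *
        Complex.exp (Complex.I * (((1 - 2 * α) * Complex.arg z : ℝ) : ℂ)) }

/-- The left-hand arc `Arc⁻(z, z̄) = −Arc⁺(−z, −z̄)`. -/
noncomputable def arcMinus (z : ℂ) : Set ℂ := (fun w => -w) '' arcPlus (-z)

/-- `C` satisfies the right-arc property if `Arc⁺(z,z̄) ⊆ C` for all `z ∈ C`. -/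
def RightArcProperty (C : Set ℂ) : Prop := ∀ z ∈ C, arcPlus z ⊆ C

/-- `C` satisfies the left-arc property if `Arc⁻(z,z̄) ⊆ C` for all `z ∈ C`. -/
def LeftArcProperty (C : Set ℂ) : Prop := ∀ z ∈ C, arcMinus z ⊆ C

/-- `C` satisfies an arc property if it satisfies the left-arc or the right-arc property. -/
def ArcProperty (C : Set ℂ) : Prop := LeftArcProperty C ∨ RightArcProperty C

/-- The right-arc completion `C⁺ = ⋃_{z ∈ C} Arc⁺(z, z̄)`. -/
noncomputable def arcPlusCompletion (C : Set ℂ) : Set ℂ := ⋃ z ∈ C, arcPlus z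

/-- The left-arc completion `C⁻ = ⋃_{z ∈ C} Arc⁻(z, z̄)`. -/
noncomputable def arcMinusCompletion (C : Set ℂ) : Set ℂ := ⋃ z ∈ C, arcMinus z

/-!
Write `Δu = u₁ - u₂`, `Δy = R u₁ - R u₂`, `Δz = T (R u₁) - T (R u₂)` and let `θ₁ = ∠(Δu, Δy)`,
`θ₂ = ∠(Δy, Δz)`, `θ = ∠(Δu, Δz)`. The SRG point `(‖Δz‖/‖Δu‖) e^{iθ}` of `T ∘ R` is the product of
`(‖Δz‖/‖Δy‖) e^{i(θ - θ₁)}` and the SRG point `(‖Δy‖/‖Δu‖) e^{iθ₁}` of `R`, and the triangle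
inequality for angles, `|θ - θ₁| ≤ θ₂`, says precisely that the first factor lies on `Arc⁺` of the
SRG point `(‖Δz‖/‖Δy‖) e^{iθ₂}` of `T`. The other three inclusions come from the factorizations
with angles `θ - θ₂`, `θ + θ₁`, `θ + θ₂`; the last two also use `θ + θ₁ + θ₂ ≤ 2π`.
Conjugate SRG points are handled by conjugating both factors.
-/

open InnerProductGeometry Real

section Angle

variable {V : Type*} [NormedAddCommGroup V] [InnerProductSpace ℝ V]

theorem abs_angle_sub_angle_le (x y z : V) : |angle x z - angle x y| ≤ angle y z := by
  have h₁ := angle_le_angle_add_angle x y z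
  have h₂ := angle_le_angle_add_angle x z y
  rw [angle_comm z y] at h₂
  exact abs_le.mpr ⟨by linarith, by linarith⟩

theorem angle_add_angle_add_angle_le_two_pi (x y z : V) :
    angle x y + angle y z + angle x z ≤ 2 * π := by
  have h := angle_le_angle_add_angle x (-z) y
  rw [angle_neg_right, angle_neg_left, angle_comm z y] at h
  linarith

end Angle

section Polar

open Complex

theorem norm_ofReal_mul_exp_I_mul {r : ℝ} (hr : 0 ≤ r) (φ : ℝ) :
    ‖(r : ℂ) * exp (I * φ)‖ = r := by
  rw [norm_mul, norm_real, mul_comm I, norm_exp_ofReal_mul_I, mul_one, Real.norm_of_nonneg hr]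

theorem arg_ofReal_mul_exp_I_mul {r φ : ℝ} (hr : 0 < r) (hφ : φ ∈ Set.Ioc (-π) π) :
    arg ((r : ℂ) * exp (I * φ)) = φ := by
  rw [mul_comm I, exp_mul_I]
  exact arg_mul_cos_add_sin_mul_I hr hφ

theorem ofReal_mul_exp_I_mul_mul (r₁ r₂ a b : ℝ) :
    (r₁ : ℂ) * exp (I * a) * ((r₂ : ℂ) * exp (I * b)) =
      ((r₁ * r₂ : ℝ) : ℂ) * exp (I * ↑(a + b)) := by
  push_cast
  rw [mul_add, Complex.exp_add]
  ring

theorem conj_ofReal_mul_exp_I_mul (r φ : ℝ) :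
    conj ((r : ℂ) * exp (I * φ)) = (r : ℂ) * exp (I * ↑(-φ)) := by
  rw [map_mul, conj_ofReal, ← exp_conj, map_mul, conj_I, conj_ofReal]
  push_cast
  ring_nf

theorem neg_ofReal_mul_exp_I_mul (r φ : ℝ) :
    -((r : ℂ) * exp (I * φ)) = (r : ℂ) * exp (I * ↑(φ - π)) := by
  push_cast
  rw [mul_sub, Complex.exp_sub, mul_comm I (π : ℂ), exp_pi_mul_I]
  ring

theorem abs_arg_ofReal_mul_exp_I_mul {r φ : ℝ} (hr : 0 < r) (hφ : φ ∈ Set.Icc 0 π) :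
    |arg ((r : ℂ) * exp (I * φ))| = φ := by
  rw [arg_ofReal_mul_exp_I_mul hr ⟨by linarith [pi_pos, hφ.1], hφ.2⟩, abs_of_nonneg hφ.1]

theorem abs_arg_neg_ofReal_mul_exp_I_mul {r φ : ℝ} (hr : 0 < r) (hφ : φ ∈ Set.Icc 0 π) :
    |arg (-((r : ℂ) * exp (I * φ)))| = π - φ := by
  rcases hφ.1.eq_or_lt with rfl | hφ₀
  · rw [ofReal_zero, mul_zero, Complex.exp_zero, mul_one, ← ofReal_neg,
      arg_ofReal_of_neg (neg_neg_of_pos hr), abs_of_pos pi_pos, sub_zero]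
  · rw [neg_ofReal_mul_exp_I_mul, arg_ofReal_mul_exp_I_mul hr ⟨by linarith, by linarith [hφ.2]⟩,
      abs_of_nonpos (by linarith [hφ.2])]
    ring

end Polar

section Arc

open Complex

theorem mem_arcPlus_of_abs_le_abs_arg (w : ℂ) {β : ℝ} (h : |β| ≤ |arg w|) :
    (‖w‖ : ℂ) * exp (I * β) ∈ arcPlus w := by
  have hq : |β / arg w| ≤ 1 := by
    rw [abs_div]
    exact div_le_one_of_le₀ h (abs_nonneg _)
  -- when `arg w = 0`, also `β = 0` and the junk value `β / 0 = 0` still gives a valid `α = 1/2`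
  refine ⟨(1 - β / arg w) / 2,
    ⟨by linarith [(abs_le.mp hq).2], by linarith [(abs_le.mp hq).1]⟩, ?_⟩
  have hβ : β / arg w * arg w = β := by
    rcases eq_or_ne (arg w) 0 with h0 | h0
    · rw [h0, abs_zero] at h
      rw [abs_nonpos_iff.mp h, zero_div, zero_mul]
    · exact div_mul_cancel₀ β h0
  rw [show (1 - 2 * ((1 - β / arg w) / 2)) * arg w = β by linear_combination hβ]

theorem mem_arcMinus_of_abs_le_abs_arg_neg (w : ℂ) {β : ℝ} (h : |β - π| ≤ |arg (-w)|) :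
    (‖w‖ : ℂ) * exp (I * β) ∈ arcMinus w := by
  refine ⟨(‖-w‖ : ℂ) * exp (I * ↑(β - π)), mem_arcPlus_of_abs_le_abs_arg (-w) h, ?_⟩
  rw [norm_neg, ← neg_ofReal_mul_exp_I_mul]
  exact neg_neg _

theorem self_mem_arcPlus (z : ℂ) : z ∈ arcPlus z := by
  refine ⟨0, ⟨le_rfl, zero_le_one⟩, ?_⟩
  rw [show (1 - 2 * 0) * arg z = arg z by ring, mul_comm I]
  exact (norm_mul_exp_arg_mul_I z).symm

theorem self_mem_arcMinus (z : ℂ) : z ∈ arcMinus z :=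
  ⟨-z, self_mem_arcPlus (-z), neg_neg z⟩

theorem conj_mem_arcPlus {w z : ℂ} (hz : z ∈ arcPlus w) : conj z ∈ arcPlus w := by
  obtain ⟨α, hα, rfl⟩ := hz
  refine ⟨1 - α, ⟨by linarith [hα.2], by linarith [hα.1]⟩, ?_⟩
  rw [conj_ofReal_mul_exp_I_mul]
  congr 4
  ring

theorem conj_mem_arcMinus {w z : ℂ} (hz : z ∈ arcMinus w) : conj z ∈ arcMinus w := by
  obtain ⟨y, hy, rfl⟩ := hz
  exact ⟨conj y, conj_mem_arcPlus hy, (map_neg conj y).symm⟩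

theorem subset_arcPlusCompletion (C : Set ℂ) : C ⊆ arcPlusCompletion C :=
  fun z hz => Set.mem_biUnion hz (self_mem_arcPlus z)

theorem subset_arcMinusCompletion (C : Set ℂ) : C ⊆ arcMinusCompletion C :=
  fun z hz => Set.mem_biUnion hz (self_mem_arcMinus z)

end Arc

section SRG

open Complex

variable {H : Type*} [NormedAddCommGroup H] [InnerProductSpace ℝ H]

theorem srgPoint_eq (du dy : H) :
    srgPoint du dy = ((‖dy‖ / ‖du‖ : ℝ) : ℂ) * exp (I * ↑(angle du dy)) := rfl

theorem srgPoint_zero_right (du : H) : srgPoint du 0 = 0 := by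
  simp [srgPoint_eq]

theorem mem_arcPlus_srgPoint {du dy : H} (hdu : du ≠ 0) (hdy : dy ≠ 0) {β : ℝ}
    (hβ : |β| ≤ angle du dy) :
    ((‖dy‖ / ‖du‖ : ℝ) : ℂ) * exp (I * β) ∈ arcPlus (srgPoint du dy) := by
  have hr : 0 < ‖dy‖ / ‖du‖ := div_pos (norm_pos_iff.mpr hdy) (norm_pos_iff.mpr hdu)
  have harg : |arg (srgPoint du dy)| = angle du dy :=
    abs_arg_ofReal_mul_exp_I_mul hr ⟨angle_nonneg _ _, angle_le_pi _ _⟩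
  convert mem_arcPlus_of_abs_le_abs_arg (srgPoint du dy) (harg ▸ hβ) using 3
  exact (norm_ofReal_mul_exp_I_mul hr.le _).symm

theorem mem_arcMinus_srgPoint {du dy : H} (hdu : du ≠ 0) (hdy : dy ≠ 0) {β : ℝ}
    (hβ : |β - π| ≤ π - angle du dy) :
    ((‖dy‖ / ‖du‖ : ℝ) : ℂ) * exp (I * β) ∈ arcMinus (srgPoint du dy) := by
  have hr : 0 < ‖dy‖ / ‖du‖ := div_pos (norm_pos_iff.mpr hdy) (norm_pos_iff.mpr hdu)
  have harg : |arg (-srgPoint du dy)| = π - angle du dy :=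
    abs_arg_neg_ofReal_mul_exp_I_mul hr ⟨angle_nonneg _ _, angle_le_pi _ _⟩
  convert mem_arcMinus_of_abs_le_abs_arg_neg (srgPoint du dy) (harg ▸ hβ) using 3
  exact (norm_ofReal_mul_exp_I_mul hr.le _).symm

theorem srgPoint_eq_mul_of_angle_eq {du dy dz : H} (hdy : dy ≠ 0) {a b : ℝ}
    (hab : angle du dz = a + b) :
    srgPoint du dz =
      ((‖dz‖ / ‖dy‖ : ℝ) : ℂ) * exp (I * a) * (((‖dy‖ / ‖du‖ : ℝ) : ℂ) * exp (I * b)) := by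
  rw [ofReal_mul_exp_I_mul_mul, ← hab, div_mul_div_cancel₀ (norm_ne_zero_iff.mpr hdy)]
  rfl

variable {du dy dz : H}

theorem srgPoint_mem_arcPlus_mul (hdy : dy ≠ 0) (hdz : dz ≠ 0) :
    srgPoint du dz ∈ arcPlus (srgPoint dy dz) * {srgPoint du dy} :=
  ⟨_, mem_arcPlus_srgPoint hdy hdz (abs_angle_sub_angle_le du dy dz), _, rfl,
    (srgPoint_eq_mul_of_angle_eq hdy (sub_add_cancel (angle du dz) (angle du dy)).symm).symm⟩

theorem srgPoint_mem_mul_arcPlus (hdu : du ≠ 0) (hdy : dy ≠ 0) :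
    srgPoint du dz ∈ {srgPoint dy dz} * arcPlus (srgPoint du dy) := by
  have h := abs_angle_sub_angle_le dz dy du
  rw [angle_comm dz du, angle_comm dz dy, angle_comm dy du] at h
  exact ⟨_, rfl, _, mem_arcPlus_srgPoint hdu hdy h,
    (srgPoint_eq_mul_of_angle_eq hdy (add_sub_cancel _ _).symm).symm⟩

theorem srgPoint_mem_arcMinus_mul_conj (hdy : dy ≠ 0) (hdz : dz ≠ 0) :
    srgPoint du dz ∈ arcMinus (srgPoint dy dz) * {conj (srgPoint du dy)} := by
  have h₁ := angle_le_angle_add_angle dy du dz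
  have h₂ := angle_add_angle_add_angle_le_two_pi du dy dz
  rw [angle_comm dy du] at h₁
  refine ⟨_, mem_arcMinus_srgPoint (β := angle du dz + angle du dy) hdy hdz
    (abs_le.mpr ⟨by linarith, by linarith⟩), _, rfl, ?_⟩
  rw [srgPoint_eq du dy, conj_ofReal_mul_exp_I_mul]
  exact (srgPoint_eq_mul_of_angle_eq hdy (by ring)).symm

theorem srgPoint_mem_conj_mul_arcMinus (hdu : du ≠ 0) (hdy : dy ≠ 0) :
    srgPoint du dz ∈ {conj (srgPoint dy dz)} * arcMinus (srgPoint du dy) := by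
  have h₁ := angle_le_angle_add_angle du dz dy
  have h₂ := angle_add_angle_add_angle_le_two_pi du dy dz
  rw [angle_comm dz dy] at h₁
  refine ⟨_, rfl, _, mem_arcMinus_srgPoint (β := angle du dz + angle dy dz) hdu hdy
    (abs_le.mpr ⟨by linarith, by linarith⟩), ?_⟩
  rw [srgPoint_eq dy dz, conj_ofReal_mul_exp_I_mul]
  exact (srgPoint_eq_mul_of_angle_eq hdy (by ring)).symm

end SRG

section Bound

open Complex

def ConjClosed (C : Set ℂ) : Prop := ∀ z ∈ C, conj z ∈ C

theorem ConjClosed.mul {A B : Set ℂ} (hA : ConjClosed A) (hB : ConjClosed B) :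
    ConjClosed (A * B) := by
  rintro _ ⟨a, ha, b, hb, rfl⟩
  rw [map_mul]
  exact Set.mul_mem_mul (hA a ha) (hB b hb)

theorem ConjClosed.inter {A B : Set ℂ} (hA : ConjClosed A) (hB : ConjClosed B) :
    ConjClosed (A ∩ B) :=
  fun z hz => ⟨hA z hz.1, hB z hz.2⟩

theorem conjClosed_arcPlusCompletion (C : Set ℂ) : ConjClosed (arcPlusCompletion C) := by
  intro z hz
  obtain ⟨w, hw, hzw⟩ := Set.mem_iUnion₂.mp hz
  exact Set.mem_biUnion hw (conj_mem_arcPlus hzw)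

theorem conjClosed_arcMinusCompletion (C : Set ℂ) : ConjClosed (arcMinusCompletion C) := by
  intro z hz
  obtain ⟨w, hw, hzw⟩ := Set.mem_iUnion₂.mp hz
  exact Set.mem_biUnion hw (conj_mem_arcMinus hzw)

theorem conjClosed_SRG {H : Type*} [NormedAddCommGroup H] [InnerProductSpace ℝ H]
    (R : H → H) (U : Set H) : ConjClosed (SRG R U) := by
  rintro z ⟨u₁, h₁, u₂, h₂, hne, rfl | rfl⟩
  · exact ⟨u₁, h₁, u₂, h₂, hne, Or.inr rfl⟩
  · exact ⟨u₁, h₁, u₂, h₂, hne, Or.inl (conj_conj _)⟩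

def compositionArcBound (A B : Set ℂ) : Set ℂ :=
  (arcPlusCompletion A * B) ∩ (A * arcPlusCompletion B) ∩
    (arcMinusCompletion A * B) ∩ (A * arcMinusCompletion B)

theorem ConjClosed.compositionArcBound {A B : Set ℂ} (hA : ConjClosed A) (hB : ConjClosed B) :
    ConjClosed (compositionArcBound A B) :=
  ((((conjClosed_arcPlusCompletion A).mul hB).inter
    (hA.mul (conjClosed_arcPlusCompletion B))).inter
      ((conjClosed_arcMinusCompletion A).mul hB)).inter
        (hA.mul (conjClosed_arcMinusCompletion B))

theorem mul_subset_compositionArcBound (A B : Set ℂ) : A * B ⊆ compositionArcBound A B :=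
  fun _ h =>
    ⟨⟨⟨Set.mul_subset_mul_right (subset_arcPlusCompletion A) h,
        Set.mul_subset_mul_left (subset_arcPlusCompletion B) h⟩,
      Set.mul_subset_mul_right (subset_arcMinusCompletion A) h⟩,
      Set.mul_subset_mul_left (subset_arcMinusCompletion B) h⟩

theorem srgPoint_mem_compositionArcBound {H : Type*} [NormedAddCommGroup H]
    [InnerProductSpace ℝ H] {du dy dz : H} (hdu : du ≠ 0) (hdy : dy ≠ 0) (hdz : dz ≠ 0)
    {A B : Set ℂ} (hA : ConjClosed A) (hB : ConjClosed B)
    (hyz : srgPoint dy dz ∈ A) (huy : srgPoint du dy ∈ B) :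
    srgPoint du dz ∈ compositionArcBound A B := by
  refine ⟨⟨⟨?_, ?_⟩, ?_⟩, ?_⟩
  · exact Set.mul_subset_mul (Set.subset_biUnion_of_mem hyz) (Set.singleton_subset_iff.mpr huy)
      (srgPoint_mem_arcPlus_mul hdy hdz)
  · exact Set.mul_subset_mul (Set.singleton_subset_iff.mpr hyz) (Set.subset_biUnion_of_mem huy)
      (srgPoint_mem_mul_arcPlus hdu hdy)
  · exact Set.mul_subset_mul (Set.subset_biUnion_of_mem hyz)
      (Set.singleton_subset_iff.mpr (hB _ huy)) (srgPoint_mem_arcMinus_mul_conj hdy hdz)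
  · exact Set.mul_subset_mul (Set.singleton_subset_iff.mpr (hA _ hyz))
      (Set.subset_biUnion_of_mem huy) (srgPoint_mem_conj_mul_arcMinus hdu hdy)

end Bound

theorem stmt11_general {H : Type*} [NormedAddCommGroup H] [InnerProductSpace ℝ H]
    (R T : H → H) (U Y : Set H)
    (hY : ∃ u ∈ Y, ∃ v ∈ Y, u ≠ v)
    (hmaps : Set.MapsTo R U Y) :
    SRG (T ∘ R) U ⊆
      (arcPlusCompletion (SRG T Y) * SRG R U) ∩ (SRG T Y * arcPlusCompletion (SRG R U)) ∩
      (arcMinusCompletion (SRG T Y) * SRG R U) ∩ (SRG T Y * arcMinusCompletion (SRG R U)) := by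
  rintro z ⟨u₁, hu₁, u₂, hu₂, hne, hz⟩
  have huy : srgPoint (u₁ - u₂) (R u₁ - R u₂) ∈ SRG R U := ⟨u₁, hu₁, u₂, hu₂, hne, Or.inl rfl⟩
  suffices h : srgPoint (u₁ - u₂) (T (R u₁) - T (R u₂)) ∈
      compositionArcBound (SRG T Y) (SRG R U) by
    rcases hz with rfl | rfl
    exacts [h, ((conjClosed_SRG T Y).compositionArcBound (conjClosed_SRG R U)) _ h]
  by_cases hdy : R u₁ = R u₂
  · obtain ⟨y₁, hy₁, y₂, hy₂, hy⟩ := hY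
    have hyz : srgPoint (y₁ - y₂) (T y₁ - T y₂) ∈ SRG T Y := ⟨y₁, hy₁, y₂, hy₂, hy, Or.inl rfl⟩
    rw [hdy, sub_self, srgPoint_zero_right] at huy ⊢
    exact mul_zero (srgPoint (y₁ - y₂) (T y₁ - T y₂)) ▸
      mul_subset_compositionArcBound _ _ (Set.mul_mem_mul hyz huy)
  have hyz : srgPoint (R u₁ - R u₂) (T (R u₁) - T (R u₂)) ∈ SRG T Y :=
    ⟨R u₁, hmaps hu₁, R u₂, hmaps hu₂, hdy, Or.inl rfl⟩
  by_cases hdz : T (R u₁) = T (R u₂)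
  · rw [hdz, sub_self, srgPoint_zero_right] at hyz ⊢
    exact zero_mul (srgPoint (u₁ - u₂) (R u₁ - R u₂)) ▸
      mul_subset_compositionArcBound _ _ (Set.mul_mem_mul hyz huy)
  exact srgPoint_mem_compositionArcBound (sub_ne_zero.mpr hne) (sub_ne_zero.mpr hdy)
    (sub_ne_zero.mpr hdz) (conjClosed_SRG T Y) (conjClosed_SRG R U) hyz huy

/-- improved arc completion bound for compositions: if `U`, `Y` each contain at
least two points and `R(U) ⊆ Y`, then `SRG_U(T∘R)` is contained in the intersection
`(SRG_Y(T)⁺·SRG_U(R)) ∩ (SRG_Y(T)·SRG_U(R)⁺) ∩ (SRG_Y(T)⁻·SRG_U(R)) ∩ (SRG_Y(T)·SRG_U(R)⁻)`. -/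
theorem stmt11 {H : Type*} [NormedAddCommGroup H] [InnerProductSpace ℝ H]
    (R T : H → H) (U Y : Set H)
    (hU : ∃ u ∈ U, ∃ v ∈ U, u ≠ v) (hY : ∃ u ∈ Y, ∃ v ∈ Y, u ≠ v)
    (hmaps : Set.MapsTo R U Y) :
    SRG (T ∘ R) U ⊆
      (arcPlusCompletion (SRG T Y) * SRG R U) ∩ (SRG T Y * arcPlusCompletion (SRG R U)) ∩
      (arcMinusCompletion (SRG T Y) * SRG R U) ∩ (SRG T Y * arcMinusCompletion (SRG R U)) :=
  stmt11_general R T U Y hY hmaps
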